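/- arXiv:math/9211201 — 7 statements merged into one kernel-verified Lean document; each statement's English description precedes it below -/
import Mathlib

section
/- Every finite-by-abelian group is nilpotent-of-class-at-most-2-by-finite: if G' is finite, then H := C_G(G') has finite index in G and H is nilpotent of class at most 2. -/
/-!
A conjugate `c g c⁻¹ = ⁅c, g⁆ g` of `g` lies in the translate `G' g`, so when `G'` is finite every
conjugacy class is finite, every element has a centralizer of finite index, and so does the
centralizer `H` of the finite set `G'`. Moreover `⁅H, H⁆ ≤ G'` is centralized by `H`, so
`⁅⁅H, H⁆, H⁆ = ⊥`.
-/

open scoped commutatorElement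

namespace Subgroup

variable {G : Type*} [Group G]

theorem index_centralizer_singleton (g : G) :
    (centralizer {g}).index = (ConjClasses.mk g).carrier.ncard := by
  calc (centralizer {g}).index = (MulAction.stabilizer (ConjAct G) g).index := by
        rw [centralizer_eq_comap_stabilizer]
        exact index_comap_of_surjective _ ConjAct.toConjAct.surjective
    _ = (ConjClasses.mk g).carrier.ncard := by
        rw [MulAction.index_stabilizer, ConjAct.orbit_eq_carrier_conjClasses]

theorem conjClass_subset_image_mul_commutator (g : G) :
    (ConjClasses.mk g).carrier ⊆ (· * g) '' _root_.commutator G := by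
  intro x hx
  obtain ⟨c, hc⟩ :=
    ConjClasses.mk_eq_mk_iff_isConj.mp (ConjClasses.mem_carrier_iff_mk_eq.mp hx).symm
  refine ⟨⁅(c : G), g⁆, commutator_mem_commutator (mem_top _) (mem_top g), ?_⟩
  show ⁅(c : G), g⁆ * g = x
  rw [commutatorElement_def, inv_mul_cancel_right, hc.eq, mul_inv_cancel_right]

theorem finiteIndex_centralizer_singleton [Finite (_root_.commutator G)] (g : G) :
    (centralizer {g}).FiniteIndex := by
  have hfinite : (ConjClasses.mk g).carrier.Finite :=
    ((Set.toFinite _).image _).subset (conjClass_subset_image_mul_commutator g)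
  have hne : (ConjClasses.mk g).carrier.Nonempty := ⟨g, ConjClasses.mem_carrier_mk⟩
  exact ⟨by rw [index_centralizer_singleton]; exact ((Set.ncard_pos hfinite).mpr hne).ne'⟩

theorem finiteIndex_centralizer [Finite (_root_.commutator G)] {s : Set G} (hs : s.Finite) :
    (centralizer s).FiniteIndex := by
  have := hs.to_subtype
  rw [centralizer_eq_iInf, ← iInf_subtype'']
  exact finiteIndex_iInf fun g => finiteIndex_centralizer_singleton (g : G)

theorem lowerCentralSeries_two_eq_bot_of_le_centralizer {H : Subgroup G}
    (hH : H ≤ centralizer (_root_.commutator G : Set G)) : H.lowerCentralSeries 2 = ⊥ := by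
  rw [lowerCentralSeries_succ, lowerCentralSeries_succ, lowerCentralSeries_zero,
    commutator_eq_bot_iff_le_centralizer]
  exact (commutator_mono le_top le_top).trans (le_centralizer_iff.mp hH)

end Subgroup

theorem finite_by_abelian_is_nilpotent2_by_finite {G : Type*} [Group G]
    (h : Finite (commutator G)) :
    (Subgroup.centralizer (commutator G : Set G)).FiniteIndex ∧
    lowerCentralSeries (Subgroup.centralizer (commutator G : Set G)) 2 = ⊥ :=
  ⟨Subgroup.finiteIndex_centralizer (Set.toFinite _),
    Subgroup.lowerCentralSeries_two_eq_bot_of_le_centralizer le_rfl⟩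
end

section
/- Every countable finite-by-abelian group is generated by finitely many abelian subgroups. -/
/-!
Let `C` be the centralizer of the finite normal subgroup `G'`. It has finite index, and its
commutator subgroup `C' ≤ G'` is central in `C`; so `G` is generated by `C` and finitely many
cyclic subgroups, and it suffices to treat a countable group `D` with `D'` finite and central.

Induct on `|D'|`. Choose `Z ≤ D'` of prime order `p`. By induction `D / Z` is the join of finitely
many abelian subgroups, and the preimage `H` of each of them satisfies `⁅H, H⁆ ≤ Z ≅ ℤ/p`.
On such an `H` the commutator is an alternating biadditive form with values in `ℤ/p` that vanishes
exactly on commuting pairs. Enumerating the countable group `H`, a symplectic Gram–Schmidt process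
produces mutually orthogonal hyperbolic pairs `(aᵢ, bᵢ)` which, with the radical of the form,
generate `H`. Then the `aᵢ` together with the radical, and the `bᵢ`, generate two abelian subgroups
whose join is `H`.
-/

open Subgroup
open scoped commutatorElement

def pairingRadical {α R : Type*} [Zero R] (β : α → α → R) : Set α := {x | ∀ y, β x y = 0}

def pairEntries {α : Type*} (P : Set (α × α)) : Set α := Prod.fst '' P ∪ Prod.snd '' P

def IsHyperbolicSystem {α : Type*} {p : ℕ} (β : α → α → ZMod p) (P : Set (α × α)) : Prop :=
  (∀ u ∈ P, β u.1 u.2 = 1) ∧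
    P.Pairwise fun u v => ∀ x ∈ ({u.1, u.2} : Set α), ∀ y ∈ ({v.1, v.2} : Set α), β x y = 0

section PairEntries

variable {α : Type*}

theorem mem_pairEntries {P : Set (α × α)} {x : α} :
    x ∈ pairEntries P ↔ ∃ v ∈ P, x ∈ ({v.1, v.2} : Set α) := by
  simp only [pairEntries, Set.mem_union, Set.mem_image, Set.mem_insert_iff,
    Set.mem_singleton_iff]
  grind

theorem pairEntries_mono {P Q : Set (α × α)} (h : P ⊆ Q) : pairEntries P ⊆ pairEntries Q :=
  Set.union_subset_union (Set.image_mono h) (Set.image_mono h)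

theorem pairEntries_insert (u : α × α) (P : Set (α × α)) :
    pairEntries (insert u P) = {u.1, u.2} ∪ pairEntries P := by
  ext x
  simp only [mem_pairEntries, Set.mem_insert_iff, Set.mem_union]
  grind

end PairEntries

section Pairing

variable {D M : Type*} [Group D] [AddCommGroup M]

structure IsAlternatingPairing (β : D → D → M) : Prop where
  mul_left : ∀ x y w, β (x * y) w = β x w + β y w
  mul_right : ∀ x y w, β x (y * w) = β x y + β x w
  apply_self : ∀ x, β x x = 0

namespace IsAlternatingPairing

variable {β : D → D → M}

theorem one_right (hβ : IsAlternatingPairing β) (x : D) : β x 1 = 0 := by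
  simpa using hβ.mul_right x 1 1

theorem inv_right (hβ : IsAlternatingPairing β) (x y : D) : β x y⁻¹ = -β x y := by
  rw [eq_neg_iff_add_eq_zero, add_comm, ← hβ.mul_right, mul_inv_cancel, hβ.one_right]

theorem swap (hβ : IsAlternatingPairing β) (x y : D) : β y x = -β x y := by
  have h := hβ.apply_self (x * y)
  rw [hβ.mul_left, hβ.mul_right, hβ.mul_right, hβ.apply_self, hβ.apply_self] at h
  rw [eq_neg_iff_add_eq_zero, add_comm]
  simpa using h

theorem pow_left (hβ : IsAlternatingPairing β) (x w : D) (n : ℕ) :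
    β (x ^ n) w = n • β x w := by
  induction n with
  | zero => rw [pow_zero, zero_smul, ← neg_eq_zero, ← hβ.swap, hβ.one_right]
  | succ n ih => rw [pow_succ, hβ.mul_left, ih, succ_nsmul]

theorem pow_right (hβ : IsAlternatingPairing β) (x w : D) (n : ℕ) :
    β x (w ^ n) = n • β x w := by
  rw [hβ.swap, hβ.pow_left, hβ.swap w x, smul_neg]

theorem eq_zero_of_mem_closure (hβ : IsAlternatingPairing β) {S : Set D} {x y : D}
    (hS : ∀ s ∈ S, β x s = 0) (hy : y ∈ closure S) : β x y = 0 := by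
  induction hy using closure_induction with
  | mem s hs => exact hS s hs
  | one => exact hβ.one_right x
  | mul s t _ _ hs ht => rw [hβ.mul_right, hs, ht, add_zero]
  | inv s _ hs => rw [hβ.inv_right, hs, neg_zero]

theorem swap_eq_zero_of_mem_radical (hβ : IsAlternatingPairing β) {x : D}
    (hx : x ∈ pairingRadical β) (y : D) : β y x = 0 := by
  rw [hβ.swap, hx y, neg_zero]

end IsAlternatingPairing

end Pairing

section Hyperbolic

variable {D : Type*} [Group D] {p : ℕ} {β : D → D → ZMod p}

namespace IsAlternatingPairing

theorem pow_val_left [NeZero p] (hβ : IsAlternatingPairing β) (x w : D) (m : ZMod p) :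
    β (x ^ m.val) w = m * β x w := by
  rw [hβ.pow_left, nsmul_eq_mul, ZMod.natCast_zmod_val]

theorem pow_val_right [NeZero p] (hβ : IsAlternatingPairing β) (x w : D) (m : ZMod p) :
    β x (w ^ m.val) = m * β x w := by
  rw [hβ.pow_right, nsmul_eq_mul, ZMod.natCast_zmod_val]

theorem isHyperbolicSystem_insert_iff (hβ : IsAlternatingPairing β) {u : D × D}
    {P : Set (D × D)} (hu : u ∉ P) :
    IsHyperbolicSystem β (insert u P) ↔ IsHyperbolicSystem β P ∧ β u.1 u.2 = 1 ∧
      ∀ x ∈ ({u.1, u.2} : Set D), ∀ y ∈ pairEntries P, β x y = 0 := by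
  have hne : ∀ v ∈ P, u ≠ v := fun v hv huv => hu (huv ▸ hv)
  simp only [IsHyperbolicSystem, Set.pairwise_insert, mem_pairEntries]
  rw [Set.forall_mem_insert]
  constructor
  · rintro ⟨⟨hu1, hP1⟩, hP2, horth⟩
    exact ⟨⟨hP1, hP2⟩, hu1, fun x hx y ⟨v, hv, hy⟩ => (horth v hv (hne v hv)).1 x hx y hy⟩
  · rintro ⟨⟨hP1, hP2⟩, hu1, horth⟩
    refine ⟨⟨hu1, hP1⟩, hP2, fun v hv _ => ⟨fun x hx y hy => horth x hx y ⟨v, hv, hy⟩,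
      fun x hx y hy => ?_⟩⟩
    rw [hβ.swap]
    simp [horth y hy x ⟨v, hv, hx⟩]

theorem exists_mul_orthogonal [NeZero p] (hβ : IsAlternatingPairing β) {P : Finset (D × D)}
    (hP : IsHyperbolicSystem β P) (d : D) :
    ∃ c ∈ closure (pairEntries (P : Set (D × D))), ∀ x ∈ pairEntries (P : Set (D × D)),
      β (d * c) x = 0 := by
  classical
  induction P using Finset.induction_on with
  | empty => exact ⟨1, one_mem _, by simp [pairEntries]⟩
  | insert u P hu ih =>
    rw [Finset.coe_insert, hβ.isHyperbolicSystem_insert_iff hu] at hP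
    obtain ⟨hP, hu1, horth⟩ := hP
    obtain ⟨c, hc, hdc⟩ := ih hP
    set a := β (d * c) u.1
    set b := β (d * c) u.2
    refine ⟨c * u.1 ^ (-b).val * u.2 ^ a.val, ?_, ?_⟩
    · rw [Finset.coe_insert, pairEntries_insert]
      exact mul_mem (mul_mem (closure_mono Set.subset_union_right hc)
        (pow_mem (subset_closure (by simp)) _)) (pow_mem (subset_closure (by simp)) _)
    · have hexpand : ∀ x, β (d * (c * u.1 ^ (-b).val * u.2 ^ a.val)) x =
          β (d * c) x + -b * β u.1 x + a * β u.2 x := fun x => by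
        rw [← mul_assoc, ← mul_assoc, hβ.mul_left, hβ.mul_left, hβ.pow_val_left,
          hβ.pow_val_left]
      rw [Finset.coe_insert, pairEntries_insert]
      rintro x (hx | hx)
      · have hu21 : β u.2 u.1 = -1 := by rw [hβ.swap, hu1]
        rcases hx with rfl | rfl
        · rw [hexpand, hβ.apply_self, hu21]; ring
        · rw [hexpand, hβ.apply_self, hu1]; ring
      · rw [hexpand, hdc x hx, horth _ (by simp) x hx, horth _ (by simp) x hx]; ring

theorem exists_isHyperbolicSystem_superset [Fact p.Prime] (hβ : IsAlternatingPairing β)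
    {P : Finset (D × D)} (hP : IsHyperbolicSystem β P) (d : D) :
    ∃ Q : Finset (D × D), P ⊆ Q ∧ IsHyperbolicSystem β Q ∧
      d ∈ closure (pairEntries (Q : Set (D × D)) ∪ pairingRadical β) := by
  classical
  obtain ⟨c, hc, hdc⟩ := hβ.exists_mul_orthogonal hP d
  have hd : d = d * c * c⁻¹ := by group
  by_cases hrad : d * c ∈ pairingRadical β
  · refine ⟨P, subset_rfl, hP, hd ▸ mul_mem (subset_closure (Or.inr hrad)) (inv_mem ?_)⟩
    exact closure_mono Set.subset_union_left hc
  -- `d * c` is orthogonal to `P` but not radical: pair it with a power of some `e * c'` ⊥ `P`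
  obtain ⟨e, he⟩ : ∃ e, β (d * c) e ≠ 0 := by simpa [pairingRadical] using hrad
  obtain ⟨c', hc', hec'⟩ := hβ.exists_mul_orthogonal hP e
  have hs : β (d * c) (e * c') ≠ 0 := by
    rwa [hβ.mul_right, hβ.eq_zero_of_mem_closure hdc hc', add_zero]
  set u : D × D := (d * c, (e * c') ^ (β (d * c) (e * c'))⁻¹.val)
  have hu1 : β u.1 u.2 = 1 := by rw [hβ.pow_val_right, inv_mul_cancel₀ hs]
  have horth : ∀ x ∈ ({u.1, u.2} : Set D), ∀ y ∈ pairEntries (P : Set (D × D)), β x y = 0 := by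
    rintro x (rfl | rfl) y hy
    · exact hdc y hy
    · rw [hβ.pow_val_left, hec' y hy, mul_zero]
  have hu : u ∉ (P : Set (D × D)) := fun huP =>
    one_ne_zero (hu1.symm.trans (hdc u.2 (Or.inr ⟨u, huP, rfl⟩)))
  refine ⟨insert u P, Finset.subset_insert u P, ?_, ?_⟩
  · rw [Finset.coe_insert, hβ.isHyperbolicSystem_insert_iff hu]
    exact ⟨hP, hu1, horth⟩
  · rw [Finset.coe_insert, pairEntries_insert, hd]
    refine mul_mem (subset_closure (by simp [u])) (inv_mem (closure_mono ?_ hc))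
    exact Set.subset_union_left.trans (Set.union_subset_union_left _ Set.subset_union_right)

theorem exists_isHyperbolicSystem_closure_eq_top [Fact p.Prime] [Countable D]
    (hβ : IsAlternatingPairing β) :
    ∃ P : Set (D × D), IsHyperbolicSystem β P ∧
      closure (pairEntries P ∪ pairingRadical β) = ⊤ := by
  obtain ⟨f, hf⟩ := exists_surjective_nat D
  choose next hsub hnext hmem using
    fun (P : {P : Finset (D × D) // IsHyperbolicSystem β P}) =>
      hβ.exists_isHyperbolicSystem_superset P.2
  let seq : ℕ → {P : Finset (D × D) // IsHyperbolicSystem β P} := fun n =>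
    Nat.rec ⟨∅, by simp [IsHyperbolicSystem]⟩ (fun n P => ⟨next P (f n), hnext P (f n)⟩) n
  have hmono : Monotone fun n => ((seq n).1 : Set (D × D)) :=
    monotone_nat_of_le_succ fun n => Finset.coe_subset.mpr (hsub (seq n) (f n))
  refine ⟨⋃ n, (seq n).1, ⟨?_, ?_⟩, ?_⟩
  · simp only [Set.mem_iUnion]
    rintro u ⟨n, hu⟩
    exact (seq n).2.1 u hu
  · exact (Set.pairwise_iUnion hmono.directed_le).mpr fun n => (seq n).2.2
  · refine eq_top_iff.mpr fun g _ => ?_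
    obtain ⟨n, rfl⟩ := hf g
    refine closure_mono ?_ (hmem (seq n) (f n))
    exact Set.union_subset_union_left _ (pairEntries_mono (Set.subset_iUnion_of_subset (n + 1)
      subset_rfl))

theorem exists_isotropic_closure_union_eq_top [Fact p.Prime] [Countable D]
    (hβ : IsAlternatingPairing β) :
    ∃ S T : Set D, (∀ x ∈ S, ∀ y ∈ S, β x y = 0) ∧ (∀ x ∈ T, ∀ y ∈ T, β x y = 0) ∧
      closure (S ∪ T) = ⊤ := by
  obtain ⟨P, ⟨-, hP⟩, hgen⟩ := hβ.exists_isHyperbolicSystem_closure_eq_top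
  have hfst : ∀ u ∈ P, ∀ v ∈ P, β u.1 v.1 = 0 := by
    intro u hu v hv
    rcases eq_or_ne u v with rfl | huv
    · exact hβ.apply_self u.1
    · exact hP hu hv huv _ (by simp) _ (by simp)
  have hsnd : ∀ u ∈ P, ∀ v ∈ P, β u.2 v.2 = 0 := by
    intro u hu v hv
    rcases eq_or_ne u v with rfl | huv
    · exact hβ.apply_self u.2
    · exact hP hu hv huv _ (by simp) _ (by simp)
  refine ⟨Prod.fst '' P ∪ pairingRadical β, Prod.snd '' P, ?_, ?_, ?_⟩
  · rintro _ (⟨u, hu, rfl⟩ | hx) _ (⟨v, hv, rfl⟩ | hy)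
    · exact hfst u hu v hv
    · exact hβ.swap_eq_zero_of_mem_radical hy _
    all_goals exact hx _
  · rintro _ ⟨u, hu, rfl⟩ _ ⟨v, hv, rfl⟩
    exact hsnd u hu v hv
  · rwa [Set.union_right_comm]

end IsAlternatingPairing

end Hyperbolic

section CommutatorPairing

variable {D M : Type*} [Group D] [AddCommGroup M] {Z : Subgroup D}

def commutatorPairing (hDZ : commutator D ≤ Z) (χ : Z →* Multiplicative M) (x y : D) : M :=
  (χ ⟨⁅x, y⁆, hDZ (commutator_mem_commutator (mem_top x) (mem_top y))⟩).toAdd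

theorem isAlternatingPairing_commutatorPairing (hZ : Z ≤ center D) (hDZ : commutator D ≤ Z)
    (χ : Z →* Multiplicative M) : IsAlternatingPairing (commutatorPairing hDZ χ) := by
  have hcentral : ∀ g x y : D, g * ⁅x, y⁆ * g⁻¹ = ⁅x, y⁆ := fun g x y => by
    rw [(mem_center_iff.mp (hZ (hDZ (commutator_mem_commutator (mem_top x) (mem_top y)))) g),
      mul_inv_cancel_right]
  refine ⟨fun x y w => ?_, fun x y w => ?_, fun x => ?_⟩
  · simp only [commutatorPairing]
    rw [add_comm, ← toAdd_mul, ← map_mul]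
    congr 3
    rw [commutatorElement_mul_left_eq_conj_mul, hcentral]
  · simp only [commutatorPairing]
    rw [← toAdd_mul, ← map_mul]
    congr 3
    rw [commutatorElement_mul_right_eq_mul_conj, mul_assoc, mul_assoc, ← mul_assoc y,
      hcentral]
  · simp only [commutatorPairing, commutatorElement_self]
    exact map_one χ

theorem commutatorPairing_eq_zero_iff {hDZ : commutator D ≤ Z} {χ : Z →* Multiplicative M}
    (hχ : Function.Injective χ) {x y : D} : commutatorPairing hDZ χ x y = 0 ↔ Commute x y := by
  rw [commutatorPairing, toAdd_eq_zero, ← map_one χ, hχ.eq_iff,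
    ← commutatorElement_eq_one_iff_commute, ← Subtype.val_inj (p := (· ∈ Z)) (b := 1)]
  rfl

end CommutatorPairing

namespace Subgroup

variable {G G' : Type*} [Group G] [Group G']

def IsFiniteSupOfAbelian (H : Subgroup G) : Prop :=
  ∃ S : Set (Subgroup G), S.Finite ∧ (∀ A ∈ S, IsMulCommutative A) ∧ sSup S = H

theorem isFiniteSupOfAbelian_of_isMulCommutative (H : Subgroup G) [IsMulCommutative H] :
    H.IsFiniteSupOfAbelian :=
  ⟨{H}, Set.finite_singleton H, by simpa, sSup_singleton⟩

theorem IsFiniteSupOfAbelian.sup {H K : Subgroup G} (hH : H.IsFiniteSupOfAbelian)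
    (hK : K.IsFiniteSupOfAbelian) : (H ⊔ K).IsFiniteSupOfAbelian := by
  obtain ⟨S, hS, hSab, rfl⟩ := hH
  obtain ⟨T, hT, hTab, rfl⟩ := hK
  exact ⟨S ∪ T, hS.union hT, fun A hA => hA.elim (hSab A) (hTab A), sSup_union⟩

theorem IsFiniteSupOfAbelian.iSup {ι : Type*} [Finite ι] {H : ι → Subgroup G}
    (h : ∀ i, (H i).IsFiniteSupOfAbelian) : (⨆ i, H i).IsFiniteSupOfAbelian := by
  choose S hS hSab hSsup using h
  refine ⟨⋃ i, S i, Set.finite_iUnion hS, fun A hA => ?_, by simp_rw [sSup_iUnion, hSsup]⟩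
  obtain ⟨i, hi⟩ := Set.mem_iUnion.mp hA
  exact hSab i A hi

theorem IsFiniteSupOfAbelian.map {H : Subgroup G} (hH : H.IsFiniteSupOfAbelian) (f : G →* G') :
    (H.map f).IsFiniteSupOfAbelian := by
  obtain ⟨S, hS, hSab, rfl⟩ := hH
  refine ⟨Subgroup.map f '' S, hS.image _, ?_, by rw [sSup_image, (gc_map_comap f).l_sSup]⟩
  rintro _ ⟨A, hA, rfl⟩
  have := hSab A hA
  infer_instance

end Subgroup

section FiniteByAbelian

variable {D : Type*} [Group D]

theorem exists_isMulCommutative_sup_eq_top_of_commutator_le [Countable D] {Z : Subgroup D}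
    (hZ : Z ≤ center D) (hZp : (Nat.card Z).Prime) (hDZ : commutator D ≤ Z) :
    ∃ A B : Subgroup D, IsMulCommutative A ∧ IsMulCommutative B ∧ A ⊔ B = ⊤ := by
  have : Fact (Nat.card Z).Prime := ⟨hZp⟩
  let χ : Z →* Multiplicative (ZMod (Nat.card Z)) :=
    (zmodCyclicMulEquiv (isCyclic_of_prime_card (α := Z) rfl)).symm.toMonoidHom
  have hcomm : ∀ {U : Set D}, (∀ x ∈ U, ∀ y ∈ U, commutatorPairing hDZ χ x y = 0) →
      ∀ x ∈ U, ∀ y ∈ U, x * y = y * x := fun hU x hx y hy =>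
    (commutatorPairing_eq_zero_iff (MulEquiv.injective _)).mp (hU x hx y hy)
  obtain ⟨S, T, hS, hT, hST⟩ :=
    (isAlternatingPairing_commutatorPairing hZ hDZ χ).exists_isotropic_closure_union_eq_top
  exact ⟨closure S, closure T, isMulCommutative_closure (hcomm hS),
    isMulCommutative_closure (hcomm hT), by rw [← Subgroup.closure_union, hST]⟩

theorem isFiniteSupOfAbelian_of_commutator_le [Countable D] {Z H : Subgroup D}
    (hZ : Z ≤ center D) (hZp : (Nat.card Z).Prime) (hZH : Z ≤ H) (hHZ : ⁅H, H⁆ ≤ Z) :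
    H.IsFiniteSupOfAbelian := by
  have hZ' : Z.subgroupOf H ≤ center H := fun x hx =>
    mem_center_iff.mpr fun g => Subtype.ext (mem_center_iff.mp (hZ hx) g)
  have hZ'p : (Nat.card (Z.subgroupOf H)).Prime := by
    rwa [Nat.card_congr (subgroupOfEquivOfLe hZH).toEquiv]
  have hHZ' : commutator H ≤ Z.subgroupOf H := by
    rw [_root_.commutator_def, commutator_le]
    intro a _ b _
    exact hHZ (commutator_mem_commutator a.2 b.2)
  obtain ⟨A, B, hA, hB, hAB⟩ := exists_isMulCommutative_sup_eq_top_of_commutator_le hZ' hZ'p hHZ'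
  have hH : H = (A ⊔ B).map H.subtype := by rw [hAB, ← MonoidHom.range_eq_map, range_subtype]
  rw [hH, Subgroup.map_sup]
  exact (isFiniteSupOfAbelian_of_isMulCommutative _).sup
    (isFiniteSupOfAbelian_of_isMulCommutative _)

theorem isFiniteSupOfAbelian_top_of_quotient [Countable D] {Z : Subgroup D} [Z.Normal]
    (hZ : Z ≤ center D) (hZp : (Nat.card Z).Prime)
    (h : (⊤ : Subgroup (D ⧸ Z)).IsFiniteSupOfAbelian) :
    (⊤ : Subgroup D).IsFiniteSupOfAbelian := by
  obtain ⟨S, hS, hSab, hSsup⟩ := h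
  have : Finite S := hS.to_subtype
  have : IsMulCommutative Z := le_centralizer_iff_isMulCommutative.mp
    (hZ.trans (center_le_centralizer _))
  let mk := QuotientGroup.mk' Z
  have hpreimage : ∀ B : S, (B.1.comap mk).IsFiniteSupOfAbelian := fun B => by
    have := hSab B.1 B.2
    refine isFiniteSupOfAbelian_of_commutator_le hZ hZp
      (by simpa [mk] using MonoidHom.ker_le_comap mk B.1) (commutator_le.mpr fun a ha b hb => ?_)
    rw [← QuotientGroup.eq_one_iff, ← QuotientGroup.mk'_apply, map_commutatorElement,
      commutatorElement_eq_one_iff_commute]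
    exact setLike_mul_comm (mem_comap.mp ha) (mem_comap.mp hb)
  suffices htop : Z ⊔ ⨆ B : S, B.1.comap mk = ⊤ by
    rw [← htop]
    exact (isFiniteSupOfAbelian_of_isMulCommutative Z).sup (.iSup hpreimage)
  have hker : mk.ker ≤ Z ⊔ ⨆ B : S, B.1.comap mk := by
    rw [QuotientGroup.ker_mk']
    exact le_sup_left
  rw [← comap_map_eq_self hker, Subgroup.map_sup, Subgroup.map_iSup]
  have hmk : Function.Surjective mk := QuotientGroup.mk'_surjective Z
  simp_rw [map_comap_eq_self_of_surjective hmk]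
  rw [← sSup_eq_iSup', hSsup, sup_top_eq, comap_top]

theorem map_center_le_center_of_surjective {Q : Type*} [Group Q] {f : D →* Q}
    (hf : Function.Surjective f) : (center D).map f ≤ center Q := by
  rintro _ ⟨k, hk, rfl⟩
  refine mem_center_iff.mpr fun q => ?_
  obtain ⟨g, rfl⟩ := hf q
  rw [← map_mul, ← map_mul, mem_center_iff.mp hk g]

theorem exists_le_prime_card {K : Subgroup D} [Finite K] (hK : K ≠ ⊥) :
    ∃ Z ≤ K, (Nat.card Z).Prime := by
  have : Nontrivial K := (nontrivial_iff_ne_bot K).mpr hK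
  obtain ⟨p, hp, hpK⟩ := Nat.exists_prime_and_dvd (Finite.one_lt_card (α := K)).ne'
  have : Fact p.Prime := ⟨hp⟩
  obtain ⟨x, hx⟩ := exists_prime_orderOf_dvd_card' p hpK
  exact ⟨zpowers (x : D), zpowers_le.mpr x.2, by rwa [Nat.card_zpowers, orderOf_coe, hx]⟩

theorem card_map_mk'_lt {Z K : Subgroup D} [Z.Normal] [Finite K] (hZK : Z ≤ K)
    (hZ : 1 < Nat.card Z) : Nat.card (K.map (QuotientGroup.mk' Z)) < Nat.card K := by
  have hmul := relIndex_mul_relIndex ⊥ Z K bot_le hZK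
  have hker := relIndex_ker (K := K) (QuotientGroup.mk' Z)
  rw [QuotientGroup.ker_mk'] at hker
  rw [relIndex_bot_left, relIndex_bot_left, hker] at hmul
  have hK : 0 < Nat.card K := Nat.card_pos
  nlinarith

theorem isFiniteSupOfAbelian_top_of_commutator_le_center [Countable D] [Finite (commutator D)]
    (hD : commutator D ≤ center D) : (⊤ : Subgroup D).IsFiniteSupOfAbelian := by
  induction hn : Nat.card (commutator D) using Nat.strong_induction_on generalizing D with
  | _ n ih =>
  rcases eq_or_ne (commutator D) ⊥ with hbot | hne
  · have : IsMulCommutative (⊤ : Subgroup D) := le_centralizer_iff_isMulCommutative.mp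
      (commutator_eq_bot_iff_le_centralizer.mp hbot)
    exact isFiniteSupOfAbelian_of_isMulCommutative ⊤
  obtain ⟨Z, hZD, hZp⟩ := exists_le_prime_card hne
  have hZ : Z ≤ center D := hZD.trans hD
  have : Z.Normal := ⟨fun z hz g => by rwa [mem_center_iff.mp (hZ hz) g, mul_inv_cancel_right]⟩
  let mk := QuotientGroup.mk' Z
  have hmk : Function.Surjective mk := QuotientGroup.mk'_surjective Z
  have hQ : commutator (D ⧸ Z) = (commutator D).map mk := by
    rw [map_commutator_eq, MonoidHom.range_eq_top.mpr hmk, _root_.commutator_def]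
  have : Finite ((commutator D).map mk) := by
    rw [← SetLike.coe_sort_coe, coe_map]
    infer_instance
  have : Finite (commutator (D ⧸ Z)) := hQ ▸ inferInstance
  have : Countable (D ⧸ Z) := Quotient.countable
  refine isFiniteSupOfAbelian_top_of_quotient hZ hZp (ih _ ?_ ?_ rfl)
  · rw [← hn, hQ]
    exact card_map_mk'_lt hZD hZp.one_lt
  · rw [hQ]
    exact (map_mono hD).trans (map_center_le_center_of_surjective hmk)

end FiniteByAbelian

section Reduction

variable {G : Type*} [Group G]

theorem finiteIndex_centralizer_of_finite (N : Subgroup G) [N.Normal] [Finite N] :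
    (centralizer (N : Set G)).FiniteIndex := by
  refine finiteIndex_of_le (H := (MulAut.conjNormal : G →* MulAut N).ker) fun x hx n hn => ?_
  have hconj := MulAut.conjNormal_apply x ⟨n, hn⟩
  rw [MonoidHom.mem_ker.mp hx, MulAut.one_apply] at hconj
  exact (mul_inv_eq_iff_eq_mul.mp hconj.symm).symm

theorem sup_iSup_zpowers_out_eq_top (H : Subgroup G) :
    H ⊔ ⨆ q : G ⧸ H, zpowers q.out = ⊤ := by
  refine eq_top_iff.mpr fun g _ => ?_
  obtain ⟨h, hout⟩ := QuotientGroup.mk_out_eq_mul H g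
  have hg : g = (g : G ⧸ H).out * (h : G)⁻¹ := by rw [hout, mul_inv_cancel_right]
  rw [hg]
  exact mul_mem (mem_sup_right (mem_iSup_of_mem _ (mem_zpowers _)))
    (mem_sup_left (inv_mem h.2))

theorem isFiniteSupOfAbelian_of_commutator_le_center [Countable G] {H : Subgroup G}
    [Finite (⁅H, H⁆ : Subgroup G)] (hH : ⁅H, H⁆ ≤ center G) : H.IsFiniteSupOfAbelian := by
  have hmap : (commutator H).map H.subtype = ⁅H, H⁆ := by
    rw [map_commutator_eq, range_subtype]
  have : Finite ((commutator H).map H.subtype) := hmap ▸ ‹_›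
  have : Finite (commutator H) :=
    Finite.of_equiv _ ((commutator H).equivMapOfInjective _ H.subtype_injective).symm.toEquiv
  have hcenter : commutator H ≤ center H := fun x hx => mem_center_iff.mpr fun g =>
    Subtype.ext (mem_center_iff.mp (hH (hmap ▸ mem_map_of_mem H.subtype hx)) g)
  have := (isFiniteSupOfAbelian_top_of_commutator_le_center hcenter).map H.subtype
  rwa [← MonoidHom.range_eq_map, range_subtype] at this

end Reduction

theorem countable_finite_by_abelian_gen_by_finitely_many_abelian
    {G : Type*} [Group G] [Countable G] (h : Finite (commutator G)) :
    ∃ (n : ℕ) (A : Fin n → Subgroup G),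
      (∀ i, IsMulCommutative (A i)) ∧ (⨆ i, A i) = ⊤ := by
  let C := centralizer (commutator G : Set G)
  have : C.FiniteIndex := finiteIndex_centralizer_of_finite _
  have : Finite (⁅C, C⁆ : Subgroup G) :=
    Finite.Set.subset (commutator G : Set G) (commutator_mono le_top le_top)
  have htop : (⊤ : Subgroup G).IsFiniteSupOfAbelian := by
    rw [← sup_iSup_zpowers_out_eq_top C]
    exact (isFiniteSupOfAbelian_of_commutator_le_center
      (commutator_centralizer_commutator_le_center G)).sup
      (.iSup fun q => isFiniteSupOfAbelian_of_isMulCommutative _)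
  obtain ⟨S, hS, hSab, hSsup⟩ := htop
  obtain ⟨n, A, -, rfl⟩ := hS.fin_param
  exact ⟨n, A, fun i => hSab _ ⟨i, rfl⟩, by rw [← sSup_range, hSsup]⟩
end

section
/- If G is an FC-group and U is a countable subgroup of G, then the normal closure of U in G is countable. -/
theorem normalClosure_countable_of_FC {G : Type*} [Group G]
    (hFC : ∀ g : G, {h : G | IsConj g h}.Finite)
    (U : Subgroup G) (hU : Countable U) :
    Countable (Subgroup.normalClosure (U : Set G)) := by
  have hUc : (U : Set G).Countable := (U : Set G).to_countable
  have hS : (Group.conjugatesOfSet (U : Set G)).Countable := by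
    rw [Group.conjugatesOfSet]
    exact Set.Countable.biUnion hUc fun a _ => (hFC a).countable
  rw [Subgroup.normalClosure]
  have : Countable (Group.conjugatesOfSet (U : Set G)) := hS.to_subtype
  set S := Group.conjugatesOfSet (U : Set G)
  have hrange : (FreeGroup.lift (Subtype.val : S → G)).range = Subgroup.closure S := by
    rw [FreeGroup.range_lift_eq_closure, Subtype.range_coe]
  rw [← hrange]
  classical
  have : Countable (FreeGroup S) := by
    have : Function.Surjective (FreeGroup.mk : List (S × Bool) → FreeGroup S) :=
      fun x => ⟨x.toWord, x.mk_toWord⟩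
    exact this.countable
  have hc : (Set.range (FreeGroup.lift (Subtype.val : S → G))).Countable :=
    Set.countable_range _
  exact hc.to_subtype
end

section
/- An FC-group G has finitely many maximal abelian subgroups if and only if G/Z(G) is finite; moreover, if G/Z(G) is infinite then G has at least 2^ℵ₀ maximal abelian subgroups. -/
/-!
Centralizers in an FC-group have finite index, and if an abelian subgroup `H` has finite index
then `Z(G)` contains `H ∩ C(r₁) ∩ ⋯ ∩ C(rₖ)` for coset representatives `rᵢ`, so it has finite
index too. Hence, when `G/Z(G)` is infinite, every finite-index subgroup contains a non-commuting
pair, and one picks pairs `(aₙ, bₙ)` recursively inside the centralizer of all earlier pairs. For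
`s ⊆ ℕ` the elements `aₙ (n ∈ s)`, `bₙ (n ∉ s)` commute, and maximal abelian subgroups containing
them are distinct for distinct `s`. Conversely every maximal abelian subgroup contains `Z(G)`,
so it is determined by its image in `G/Z(G)`.
-/

def IsFCGroup (G : Type*) [Group G] : Prop :=
  ∀ g : G, {h : G | IsConj g h}.Finite

section

open Cardinal Subgroup

variable {G : Type*} [Group G]

theorem Subgroup.finiteIndex_centralizer_singleton_of_finite {g : G}
    (hg : {h : G | IsConj g h}.Finite) : (centralizer {g}).FiniteIndex := by
  have horbit : MulAction.orbit (ConjAct G) g = {h : G | IsConj g h} := by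
    ext h
    exact ConjAct.mem_orbit_conjAct.trans isConj_comm
  have hindex : (centralizer {g}).index = (MulAction.stabilizer (ConjAct G) g).index := by
    rw [centralizer_eq_comap_stabilizer]
    exact index_comap_of_surjective _ ConjAct.toConjAct.surjective
  refine ⟨?_⟩
  rw [hindex, MulAction.index_stabilizer, horbit]
  exact (Set.ncard_pos hg).mpr ⟨g, IsConj.refl g⟩ |>.ne'

namespace IsFCGroup

theorem finiteIndex_centralizer (hG : IsFCGroup G) {s : Set G} (hs : s.Finite) :
    (centralizer s).FiniteIndex := by
  rw [centralizer_eq_iInf, ← hs.coe_toFinset]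
  exact finiteIndex_iInf' _ fun g _ => finiteIndex_centralizer_singleton_of_finite (hG g)

theorem finiteIndex_center (hG : IsFCGroup G) (H : Subgroup G) [H.FiniteIndex]
    [IsMulCommutative H] : (center G).FiniteIndex := by
  set R := Set.range fun q : G ⧸ H => q.out
  have hgen : closure ((H : Set G) ∪ R) = ⊤ := by
    refine eq_top_iff.mpr fun g _ => ?_
    obtain ⟨h, hh⟩ := QuotientGroup.mk_out_eq_mul H g
    rw [eq_mul_inv_of_mul_eq hh.symm]
    exact mul_mem (subset_closure (Or.inr ⟨_, rfl⟩)) (inv_mem (subset_closure (Or.inl h.2)))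
  have hle : H ⊓ centralizer R ≤ center G := by
    rw [← centralizer_univ, ← coe_top, ← hgen, centralizer_closure]
    rintro z ⟨hzH, hzR⟩ g (hg | hg)
    · exact le_centralizer H hzH g hg
    · exact hzR g hg
  have := hG.finiteIndex_centralizer (s := R) (Set.finite_range _)
  exact finiteIndex_of_le hle

theorem exists_not_commute (hG : IsFCGroup G) (hZ : ¬ (center G).FiniteIndex)
    (H : Subgroup G) [H.FiniteIndex] : ∃ a ∈ H, ∃ b ∈ H, ¬ Commute a b := by
  by_contra! hcomm
  have : IsMulCommutative H := .of_setLike_mul_comm hcomm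
  exact hZ (hG.finiteIndex_center H)

theorem exists_seq_not_commute (hG : IsFCGroup G) (hZ : ¬ (center G).FiniteIndex) :
    ∃ f : ℕ → Bool → G, (∀ n, ¬ Commute (f n true) (f n false)) ∧
      ∀ m n, m ≠ n → ∀ i j, Commute (f m i) (f n j) := by
  let r : (Bool → G) → (Bool → G) → Prop := fun p q => ∀ i j, Commute (p i) (q j)
  have : Std.Symm r := ⟨fun _ _ h i j => (h j i).symm⟩
  obtain ⟨f, hf, hr⟩ := exists_seq_of_forall_finset_exists'
    (fun p : Bool → G => ¬ Commute (p true) (p false)) r fun s _ => by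
      let C := centralizer (⋃ p ∈ s, Set.range p)
      have : C.FiniteIndex :=
        hG.finiteIndex_centralizer (s.finite_toSet.biUnion fun p _ => Set.finite_range p)
      obtain ⟨a, ha, b, hb, hab⟩ := hG.exists_not_commute hZ C
      refine ⟨fun i => cond i a b, hab, fun p hp i j => ?_⟩
      have hpi : p i ∈ ⋃ p ∈ s, Set.range p := Set.mem_biUnion hp ⟨i, rfl⟩
      cases j
      · exact hb _ hpi
      · exact ha _ hpi
  exact ⟨f, hf, fun m n hmn => hr hmn⟩

end IsFCGroup

namespace Subgroup

theorem isMulCommutative_sSup_of_isChain {c : Set (Subgroup G)} (hne : c.Nonempty)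
    (hchain : IsChain (· ≤ ·) c) (hcomm : ∀ K ∈ c, IsMulCommutative K) :
    IsMulCommutative (sSup c : Subgroup G) := by
  refine .of_setLike_mul_comm fun a ha b hb => ?_
  obtain ⟨K, hK, haK⟩ := (mem_sSup_of_directedOn hne hchain.directedOn).mp ha
  obtain ⟨L, hL, hbL⟩ := (mem_sSup_of_directedOn hne hchain.directedOn).mp hb
  rcases hchain.total hK hL with hKL | hLK
  · exact isMulCommutative_iff_of_setLike.mp (hcomm L hL) a (hKL haK) b hbL
  · exact isMulCommutative_iff_of_setLike.mp (hcomm K hK) a haK b (hLK hbL)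

theorem exists_le_maximal_isMulCommutative {A : Subgroup G} (hA : IsMulCommutative A) :
    ∃ M, A ≤ M ∧ Maximal (fun B : Subgroup G => IsMulCommutative B) M :=
  zorn_le_nonempty₀ {B : Subgroup G | IsMulCommutative B}
    (fun c hc hchain K hK => ⟨(sSup c : Subgroup G),
      isMulCommutative_sSup_of_isChain ⟨K, hK⟩ hchain hc, fun _ => le_sSup⟩) A hA

theorem center_le_of_maximal_isMulCommutative {A : Subgroup G}
    (hA : Maximal (fun B : Subgroup G => IsMulCommutative B) A) : center G ≤ A := by
  have : IsMulCommutative (closure ((A : Set G) ∪ center G)) := by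
    refine isMulCommutative_closure ?_
    rintro a (ha | ha) b (hb | hb)
    · exact isMulCommutative_iff_of_setLike.mp hA.1 a ha b hb
    · exact mem_center_iff.mp hb a
    · exact (mem_center_iff.mp ha b).symm
    · exact (mem_center_iff.mp ha b).symm
  have hle := hA.2 this fun a ha => subset_closure (Or.inl ha)
  exact fun z hz => hle (subset_closure (Or.inr hz))

theorem finite_setOf_maximal_isMulCommutative [Finite (G ⧸ center G)] :
    {A : Subgroup G | Maximal (fun B : Subgroup G => IsMulCommutative B) A}.Finite := by
  have hcomap : ∀ A, Maximal (fun B : Subgroup G => IsMulCommutative B) A →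
      comap (QuotientGroup.mk' (center G)) (map (QuotientGroup.mk' (center G)) A) = A :=
    fun A hA => by
      rw [QuotientGroup.comap_map_mk', sup_eq_right.mpr (center_le_of_maximal_isMulCommutative hA)]
  refine Set.Finite.of_finite_image (f := map (QuotientGroup.mk' (center G))) (Set.toFinite _) ?_
  intro A hA B hB hAB
  rw [← hcomap A hA, ← hcomap B hB]
  exact congrArg _ hAB

end Subgroup

theorem IsFCGroup.two_pow_aleph0_le_mk_maximal_isMulCommutative (hG : IsFCGroup G)
    (hZ : ¬ (center G).FiniteIndex) :
    2 ^ ℵ₀ ≤ #{A : Subgroup G | Maximal (fun B : Subgroup G => IsMulCommutative B) A} := by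
  classical
  obtain ⟨f, hf, hcomm⟩ := hG.exists_seq_not_commute hZ
  let T : Set ℕ → Set G := fun s => Set.range fun n => f n (decide (n ∈ s))
  have hT : ∀ s, IsMulCommutative (closure (T s)) := by
    refine fun s => isMulCommutative_closure ?_
    rintro _ ⟨m, rfl⟩ _ ⟨n, rfl⟩
    by_cases hmn : m = n
    · subst hmn; rfl
    · exact hcomm m n hmn _ _
  choose M hTM hM using fun s => exists_le_maximal_isMulCommutative (hT s)
  have hmem : ∀ s n, f n (decide (n ∈ s)) ∈ M s := fun s n => hTM s (subset_closure ⟨n, rfl⟩)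
  have hinj : Function.Injective M := by
    intro s t hst
    ext n
    by_contra hn
    have hst' : Commute (f n (decide (n ∈ s))) (f n (decide (n ∈ t))) :=
      isMulCommutative_iff_of_setLike.mp (hM s).1 _ (hmem s n) _ (hst ▸ hmem t n)
    by_cases hns : n ∈ s <;> by_cases hnt : n ∈ t <;> simp only [hns, hnt, iff_true, iff_false, not_true_eq_false,
      not_false_eq_true, decide_true, decide_false] at hn hst'
    · exact hf n hst'
    · exact hf n hst'.symm
  simpa [mk_set] using lift_mk_le_lift_mk_of_injective ((Set.injective_codRestrict hM).mpr hinj)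

end

theorem maximal_abelian_subgroups_finite_iff {G : Type*} [Group G]
    (hFC : ∀ g : G, {h : G | IsConj g h}.Finite) :
    ((Set.Finite {A : Subgroup G | IsMulCommutative A ∧
        ∀ B : Subgroup G, IsMulCommutative B → A ≤ B → B = A}) ↔
      Finite (G ⧸ Subgroup.center G)) ∧
    (¬ Finite (G ⧸ Subgroup.center G) →
      (2 : Cardinal) ^ Cardinal.aleph0 ≤
        Cardinal.mk {A : Subgroup G | IsMulCommutative A ∧
          ∀ B : Subgroup G, IsMulCommutative B → A ≤ B → B = A}) := by
  have hG : IsFCGroup G := hFC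
  have hmaximal : {A : Subgroup G | IsMulCommutative A ∧
      ∀ B : Subgroup G, IsMulCommutative B → A ≤ B → B = A} =
      {A | Maximal (fun B : Subgroup G => IsMulCommutative B) A} := by
    ext A
    simp only [Set.mem_ofPred_eq, maximal_iff, eq_comm]
  rw [hmaximal, ← Subgroup.finiteIndex_iff_finite_quotient]
  refine ⟨⟨fun hfin => ?_, fun _ => Subgroup.finite_setOf_maximal_isMulCommutative⟩,
    hG.two_pow_aleph0_le_mk_maximal_isMulCommutative⟩
  by_contra hZ
  exact (hfin.lt_aleph0.trans (Cardinal.cantor _)).not_ge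
    (hG.two_pow_aleph0_le_mk_maximal_isMulCommutative hZ)
end

section
/- In a direct sum of finite groups, every set of pairwise non-commuting elements is countable. -/
lemma aux_noncomm_countable
    {I : Type*} (G : I → Type*) [∀ i, Group (G i)] [∀ i, Finite (G i)] :
    ∀ n : ℕ, ∀ S : Set (∀ i, G i),
      (∀ f ∈ S, ∀ g ∈ S, f ≠ g → ∃ i, f i * g i ≠ g i * f i) →
      (∀ f ∈ S, ∃ s : Finset I, s.card ≤ n ∧ ∀ i ∉ s, f i = 1) →
      S.Countable := by
  classical
  intro n
  induction n with
  | zero =>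
    intro S hnc hsupp
    apply Set.Subsingleton.countable
    intro f hf g hg
    by_contra hfg
    obtain ⟨i, hi⟩ := hnc f hf g hg hfg
    obtain ⟨s, hs0, hs⟩ := hsupp f hf
    obtain ⟨t, ht0, ht⟩ := hsupp g hg
    have hf1 : f i = 1 := hs i (by simp [Finset.card_eq_zero.mp (Nat.le_zero.mp hs0)])
    have hg1 : g i = 1 := ht i (by simp [Finset.card_eq_zero.mp (Nat.le_zero.mp ht0)])
    exact hi (by rw [hf1, hg1])
  | succ n ih =>
    intro S hnc hsupp
    by_contra hS
    by_cases hcase : ∀ (i : I) (a : G i), a ≠ 1 → {f ∈ S | f i = a}.Countable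
    · -- then S is countable, contradiction
      apply hS
      rcases Set.eq_empty_or_nonempty S with h | ⟨f₀, hf₀⟩
      · simp [h]
      obtain ⟨s₀, _, hs₀⟩ := hsupp f₀ hf₀
      have hsub : S ⊆ insert f₀ (⋃ i ∈ (s₀ : Set I), ⋃ a ∈ {a : G i | a ≠ 1},
          {f ∈ S | f i = a}) := by
        intro f hf
        by_cases hffe : f = f₀
        · exact Set.mem_insert_iff.mpr (Or.inl hffe)
        · obtain ⟨i, hi⟩ := hnc f hf f₀ hf₀ hffe
          have hf1 : f i ≠ 1 := by
            intro h; exact hi (by rw [h, one_mul, mul_one])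
          have hf₀1 : f₀ i ≠ 1 := by
            intro h; exact hi (by rw [h, one_mul, mul_one])
          refine Set.mem_insert_iff.mpr (Or.inr ?_)
          refine Set.mem_biUnion (show i ∈ (s₀ : Set I) from ?_) ?_
          · by_contra hi0
            exact hf₀1 (hs₀ i (by simpa using hi0))
          · exact Set.mem_biUnion hf1 ⟨hf, rfl⟩
      refine Set.Countable.mono hsub ?_
      refine Set.Countable.insert _ ?_
      refine Set.Countable.biUnion (s₀.countable_toSet) fun i hi => ?_
      refine Set.Countable.biUnion ((Set.toFinite _).countable) fun a ha => ?_
      exact hcase i a ha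
    · push_neg at hcase
      obtain ⟨i, a, ha, hT⟩ := hcase
      set T : Set (∀ i, G i) := {f ∈ S | f i = a} with hTdef
      apply hT
      set m : (∀ i, G i) → (∀ i, G i) := fun f => Function.update f i 1 with hm
      have hinj : Set.InjOn m T := by
        intro f hf g hg hfg
        funext j
        by_cases hji : j = i
        · subst hji; rw [hf.2, hg.2]
        · have := congrFun hfg j
          simpa [hm, Function.update_of_ne hji] using this
      refine Set.MapsTo.countable_of_injOn (Set.mapsTo_image m T) hinj ?_
      apply ih
      · rintro f' ⟨f, hf, rfl⟩ g' ⟨g, hg, rfl⟩ hne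
        have hfg : f ≠ g := fun h => hne (by rw [h])
        obtain ⟨j, hj⟩ := hnc f hf.1 g hg.1 hfg
        have hji : j ≠ i := by
          intro h; subst h
          rw [hf.2, hg.2] at hj
          exact hj rfl
        refine ⟨j, ?_⟩
        simpa [hm, Function.update_of_ne hji] using hj
      · rintro f' ⟨f, hf, rfl⟩
        obtain ⟨s, hcard, hs⟩ := hsupp f hf.1
        have hiS : i ∈ s := by
          by_contra h
          exact ha (hf.2 ▸ (hs i h).symm ▸ rfl)
        refine ⟨s.erase i, ?_, ?_⟩
        · have := Finset.card_erase_of_mem hiS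
          omega
        · intro j hj
          by_cases hji : j = i
          · subst hji; simp [hm]
          · rw [hm]
            simp only [Function.update_of_ne hji]
            exact hs j (fun hjs => hj (Finset.mem_erase.mpr ⟨hji, hjs⟩))

theorem pairwise_noncommuting_countable_in_directSum
    {I : Type*} (G : I → Type*) [∀ i, Group (G i)] [∀ i, Finite (G i)]
    (S : Set (∀ i, G i))
    (hsupp : ∀ f ∈ S, {i | f i ≠ 1}.Finite)
    (hnc : ∀ f ∈ S, ∀ g ∈ S, f ≠ g → f * g ≠ g * f) :
    S.Countable := by
  have hsub : S ⊆ ⋃ n : ℕ, {f ∈ S | ∃ s : Finset I, s.card ≤ n ∧ ∀ i ∉ s, f i = 1} := by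
    intro f hf
    refine Set.mem_iUnion.mpr ⟨(hsupp f hf).toFinset.card, hf, (hsupp f hf).toFinset,
      le_refl _, fun i hi => ?_⟩
    by_contra h
    exact hi ((hsupp f hf).mem_toFinset.mpr h)
  refine Set.Countable.mono hsub ?_
  refine Set.countable_iUnion fun n => ?_
  apply aux_noncomm_countable G n
  · intro f hf g hg hfg
    have := hnc f hf.1 g hg.1 hfg
    by_contra h
    push_neg at h
    exact this (funext fun i => h i)
  · exact fun f hf => hf.2
end

section
/- Let E be the group generated by elements a and a_α (α < ω₁) subject to the relations a^p = a_α^p = [a, a_α] = 1 and [a_α, a_β] = a for α < β (p an odd prime). Then { a_α : α < ω₁ } is a set of ω₁ pairwise non-commuting elements of E; consequently E does not embed into any direct sum of finite groups. -/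
/-!
All commutators `⁅f α, f β⁆` with `α < β` equal the same element `a ≠ 1`, so distinct `f α` never
commute, and the same stays true after any homomorphism that does not kill `a`. An injective
homomorphism into a product of finite groups has a coordinate `H i` in which `a` survives; the
images of the `f α` in `H i` are then pairwise distinct, which is impossible for infinitely
many `α`.
-/

open scoped commutatorElement

section CommutatorFamily

variable {G : Type*} [Group G] {ι : Type*} [LinearOrder ι] {a : G} {f : ι → G}

theorem not_commute_of_commutatorElement_eq (ha : a ≠ 1)
    (hrel : ∀ α β, α < β → ⁅f α, f β⁆ = a) {α β : ι} (hαβ : α ≠ β) :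
    ¬Commute (f α) (f β) := by
  have key : ∀ {γ δ}, γ < δ → ¬Commute (f γ) (f δ) := fun hγδ hc =>
    ha (hrel _ _ hγδ ▸ commutatorElement_eq_one_iff_commute.2 hc)
  rcases hαβ.lt_or_gt with hlt | hlt
  · exact key hlt
  · exact fun hc => key hlt hc.symm

theorem injective_of_commutatorElement_eq (ha : a ≠ 1)
    (hrel : ∀ α β, α < β → ⁅f α, f β⁆ = a) : Function.Injective f := by
  intro α β hfαβ
  by_contra hαβ
  exact not_commute_of_commutatorElement_eq ha hrel hαβ (hfαβ ▸ Commute.refl (f α))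

theorem finite_of_monoidHom_of_commutatorElement_eq {K : Type*} [Group K] [Finite K]
    (φ : G →* K) (ha : φ a ≠ 1) (hrel : ∀ α β, α < β → ⁅f α, f β⁆ = a) : Finite ι :=
  Finite.of_injective (φ ∘ f) <| injective_of_commutatorElement_eq ha fun α β hαβ => by
    simp only [Function.comp_apply, ← map_commutatorElement, hrel α β hαβ]

theorem not_exists_injective_monoidHom_pi_of_commutatorElement_eq [Infinite ι] (ha : a ≠ 1)
    (hrel : ∀ α β, α < β → ⁅f α, f β⁆ = a) {I : Type*} (H : I → Type*) [∀ i, Group (H i)]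
    [∀ i, Finite (H i)] : ¬∃ e : G →* (∀ i, H i), Function.Injective e := by
  rintro ⟨e, he⟩
  obtain ⟨i, hi⟩ : ∃ i, e a i ≠ 1 := Function.ne_iff.1 <| (map_ne_one_iff e he).2 ha
  have := finite_of_monoidHom_of_commutatorElement_eq ((Pi.evalMonoidHom H i).comp e) hi hrel
  exact not_finite ι

end CommutatorFamily

theorem extraspecial_group_not_in_directSum_general
    {ι : Type} [LinearOrder ι] (hι : Cardinal.mk ι = Cardinal.aleph 1)
    {E : Type} [Group E]
    (a : E) (f : ι → E) (ha : a ≠ 1)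
    (hrel : ∀ α β, α < β → ⁅f α, f β⁆ = a) :
    (Function.Injective f ∧ ∀ α β, α ≠ β → f α * f β ≠ f β * f α) ∧
    ∀ (I : Type) (H : I → Type) [∀ i, Group (H i)] [∀ i, Finite (H i)],
      ¬ ∃ e : E →* (∀ i, H i),
        Function.Injective e ∧ ∀ x : E, {i | e x i ≠ 1}.Finite := by
  have : Infinite ι := Cardinal.infinite_iff.2 (hι ▸ Cardinal.aleph0_le_aleph 1)
  refine ⟨⟨injective_of_commutatorElement_eq ha hrel,
    fun α β => not_commute_of_commutatorElement_eq ha hrel⟩, ?_⟩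
  rintro I H _ _ ⟨e, he, -⟩
  exact not_exists_injective_monoidHom_pi_of_commutatorElement_eq ha hrel H ⟨e, he⟩

theorem extraspecial_group_not_in_directSum
    {ι : Type} [LinearOrder ι] (hι : Cardinal.mk ι = Cardinal.aleph 1)
    {E : Type} [Group E] (p : ℕ) (hp : p.Prime) (hodd : p ≠ 2)
    (a : E) (f : ι → E) (ha : a ≠ 1)
    (hap : a ^ p = 1) (hfp : ∀ α, f α ^ p = 1)
    (hcomm : ∀ α, a * f α = f α * a)
    (hrel : ∀ α β, α < β → ⁅f α, f β⁆ = a) :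
    (Function.Injective f ∧ ∀ α β, α ≠ β → f α * f β ≠ f β * f α) ∧
    ∀ (I : Type) (H : I → Type) [∀ i, Group (H i)] [∀ i, Finite (H i)],
      ¬ ∃ e : E →* (∀ i, H i),
        Function.Injective e ∧ ∀ x : E, {i | e x i ≠ 1}.Finite :=
  extraspecial_group_not_in_directSum_general hι a f ha hrel
end

section
/- If there exists a Kurepa family, then there exists an almost disjoint Kurepa family of the same cardinality. -/
/-- The canonical set of ordinals below `ω₁`, as a type. -/
abbrev Omega1 : Type := ((Cardinal.aleph 1).ord).ToType

/-- A Kurepa family: a family of at least `ℵ₂` subsets of `ω₁` such that for every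
`α < ω₁` the family of traces on `α` is countable. -/
def IsKurepaFamily (F : Set (Set Omega1)) : Prop :=
  Cardinal.aleph 2 ≤ Cardinal.mk F ∧
  ∀ α : Omega1, {s : Set Omega1 | ∃ A ∈ F, s = A ∩ {x | x < α}}.Countable

/-!
Code each initial segment `A ∩ α` of a member `A` of the Kurepa family by a countable ordinal,
using that there are only `ℵ₁` such traces, and replace `A` by the set of codes of its traces.
Two distinct sets have only countably many common traces, namely those cut off below a point where
they differ, so the new sets are almost disjoint. The codes below `γ` name countably many traces,
all bounded by some `β`; hence the trace on `γ` of the new set coded from `A` depends only on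
`A ∩ β`, and the new family is again Kurepa. Countable members have to be dropped first, but
there are at most `ℵ₁` of them.
-/

open Cardinal Set

section InitialTraces

variable {α : Type*} [LinearOrder α]

def initialTraces (A : Set α) : Set (Set α) :=
  range fun a => A ∩ Iio a

def tracesOn (F : Set (Set α)) (a : α) : Set (Set α) :=
  {s | ∃ A ∈ F, s = A ∩ Iio a}

def traces (F : Set (Set α)) : Set (Set α) :=
  ⋃ A ∈ F, initialTraces A

theorem initialTraces_subset_traces {F : Set (Set α)} {A : Set α} (hA : A ∈ F) :
    initialTraces A ⊆ traces F :=
  subset_biUnion_of_mem (u := initialTraces) hA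

theorem traces_eq_iUnion_tracesOn (F : Set (Set α)) : traces F = ⋃ a, tracesOn F a := by
  ext s
  simp only [traces, tracesOn, initialTraces, mem_iUnion, mem_range, mem_ofPred_eq, exists_prop]
  exact ⟨fun ⟨A, hA, a, h⟩ => ⟨a, A, hA, h.symm⟩, fun ⟨a, A, hA, h⟩ => ⟨A, hA, a, h.symm⟩⟩

theorem tracesOn_mono {F G : Set (Set α)} (h : F ⊆ G) (a : α) : tracesOn F a ⊆ tracesOn G a := by
  rintro s ⟨A, hA, rfl⟩
  exact ⟨A, h hA, rfl⟩

theorem self_mem_initialTraces {A : Set α} {b : α} (h : A ⊆ Iio b) : A ∈ initialTraces A :=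
  ⟨b, inter_eq_left.2 h⟩

theorem countable_of_mem_initialTraces (hα : ∀ a : α, (Iio a).Countable) {A t : Set α}
    (ht : t ∈ initialTraces A) : t.Countable := by
  obtain ⟨a, rfl⟩ := ht
  exact (hα a).mono inter_subset_right

theorem countable_of_mem_traces (hα : ∀ a : α, (Iio a).Countable) {F : Set (Set α)} {t : Set α}
    (ht : t ∈ traces F) : t.Countable := by
  obtain ⟨A, -, htA⟩ := mem_iUnion₂.1 ht
  exact countable_of_mem_initialTraces hα htA

theorem sUnion_initialTraces [NoMaxOrder α] (A : Set α) : ⋃₀ initialTraces A = A := by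
  refine subset_antisymm (sUnion_subset ?_) fun x hx => ?_
  · rintro _ ⟨a, rfl⟩
    exact inter_subset_left
  · obtain ⟨b, hxb⟩ := exists_gt x
    exact ⟨A ∩ Iio b, ⟨b, rfl⟩, hx, hxb⟩

theorem initialTraces_injective [NoMaxOrder α] : Function.Injective (initialTraces (α := α)) :=
  fun A B h => by rw [← sUnion_initialTraces A, h, sUnion_initialTraces]

theorem not_countable_initialTraces [NoMaxOrder α] (hα : ∀ a : α, (Iio a).Countable)
    {A : Set α} (hA : ¬A.Countable) : ¬(initialTraces A).Countable := fun h =>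
  hA (sUnion_initialTraces A ▸ h.sUnion fun _ => countable_of_mem_initialTraces hα)

theorem countable_initialTraces_inter_of_mem_of_notMem (hα : ∀ a : α, (Iic a).Countable)
    {A B : Set α} {x : α} (hxA : x ∈ A) (hxB : x ∉ B) :
    (initialTraces A ∩ initialTraces B).Countable := by
  refine ((hα x).image fun a => A ∩ Iio a).mono ?_
  rintro _ ⟨⟨a, rfl⟩, b, hb⟩
  -- a common trace cannot contain `x`, so it is cut off at or below `x`
  refine ⟨a, not_lt.1 fun hxa => hxB ?_, rfl⟩
  have hx : x ∈ B ∩ Iio b := (show B ∩ Iio b = A ∩ Iio a from hb) ▸ ⟨hxA, hxa⟩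
  exact hx.1

theorem countable_initialTraces_inter (hα : ∀ a : α, (Iic a).Countable) {A B : Set α}
    (hAB : A ≠ B) : (initialTraces A ∩ initialTraces B).Countable := by
  obtain ⟨x, ⟨hxA, hxB⟩ | ⟨hxB, hxA⟩⟩ := symmDiff_nonempty.2 hAB
  · exact countable_initialTraces_inter_of_mem_of_notMem hα hxA hxB
  · rw [inter_comm]
    exact countable_initialTraces_inter_of_mem_of_notMem hα hxB hxA

theorem inter_initialTraces_inter_Iio {S : Set (Set α)} {b : α} (hS : ∀ t ∈ S, t ⊆ Iio b)
    (A : Set α) : S ∩ initialTraces (A ∩ Iio b) = S ∩ initialTraces A := by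
  ext t
  refine and_congr_right fun ht => ⟨?_, ?_⟩
  · rintro ⟨a, rfl⟩
    exact ⟨b ⊓ a, by simp only [← Iio_inter_Iio, inter_assoc]⟩
  · rintro ⟨a, rfl⟩
    refine ⟨a, ?_⟩
    dsimp only at ht ⊢
    rw [inter_right_comm, inter_eq_left.2 (hS _ ht)]

section Coding

variable {β : Type*} {g : Set α → β} {F : Set (Set α)}

theorem injOn_image_initialTraces [NoMaxOrder α] (hg : InjOn g (traces F)) :
    InjOn (fun A => g '' initialTraces A) F := fun _ hA _ hB h =>
  initialTraces_injective <|
    (hg.image_eq_image_iff (initialTraces_subset_traces hA) (initialTraces_subset_traces hB)).1 h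

theorem countable_image_initialTraces_inter (hα : ∀ a : α, (Iic a).Countable)
    (hg : InjOn g (traces F)) {A B : Set α} (hA : A ∈ F) (hB : B ∈ F) (hAB : A ≠ B) :
    (g '' initialTraces A ∩ g '' initialTraces B).Countable := by
  rw [← hg.image_inter (initialTraces_subset_traces hA) (initialTraces_subset_traces hB)]
  exact (countable_initialTraces_inter hα hAB).image g

end Coding

end InitialTraces

theorem Cardinal.mk_sep_eq_of_mk_sep_not_lt {β : Type*} {s : Set β} {p : β → Prop}
    (hs : ℵ₀ ≤ #s) (h : #{x ∈ s | ¬p x} < #s) : #{x ∈ s | p x} = #s := by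
  have := Cardinal.infinite_iff.2 hs
  rw [mk_sep] at h
  have hcompl := mk_compl_of_infinite {x : s | ¬p x} h
  rw [mk_sep]
  simpa only [compl_ofPred, not_not] using hcompl

namespace Omega1

theorem mk_eq : #Omega1 = ℵ₁ := by
  rw [mk_toType, card_ord]

instance : Nonempty Omega1 :=
  mk_ne_zero_iff.1 (mk_eq ▸ (aleph_pos 1).ne')

instance : NoMaxOrder Omega1 :=
  Cardinal.noMaxOrder (aleph0_le_aleph 1)

theorem countable_Iio (a : Omega1) : (Iio a).Countable :=
  le_aleph0_iff_set_countable.1 <| lt_aleph_one_iff.1 <|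
    (mk_Iio_lt a (by rw [mk_eq, Ordinal.type_toType])).trans_eq mk_eq

theorem countable_Iic (a : Omega1) : (Iic a).Countable := by
  rw [← Iio_insert]
  exact (countable_Iio a).insert a

theorem exists_subset_Iio_of_countable {S : Set Omega1} (hS : S.Countable) :
    ∃ b, S ⊆ Iio b := by
  refine not_isCofinal_iff.1 fun hcof => ?_
  have hcof_eq : Order.cof Omega1 = ℵ₁ := by
    rw [Ordinal.cof_toType, isRegular_aleph_one.cof_ord]
  exact (lt_aleph_one_iff.2 (le_aleph0_iff_set_countable.2 hS)).not_ge
    (hcof_eq ▸ Order.cof_le hcof)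

end Omega1

section Kurepa

variable {F : Set (Set Omega1)}

theorem mk_traces_le_aleph_one (hF : ∀ a, (tracesOn F a).Countable) : #(traces F) ≤ ℵ₁ := by
  rw [traces_eq_iUnion_tracesOn]
  calc #(⋃ a, tracesOn F a) ≤ #Omega1 * ⨆ a, #(tracesOn F a) := mk_iUnion_le _
    _ ≤ ℵ₁ * ℵ₀ :=
      mul_le_mul' Omega1.mk_eq.le (ciSup_le' fun a => le_aleph0_iff_set_countable.2 (hF a))
    _ = ℵ₁ := aleph_mul_aleph0 1

theorem mem_traces_of_countable {A : Set Omega1} (hA : A ∈ F) (hAc : A.Countable) :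
    A ∈ traces F := by
  obtain ⟨b, hb⟩ := Omega1.exists_subset_Iio_of_countable hAc
  exact initialTraces_subset_traces hA (self_mem_initialTraces hb)

theorem IsKurepaFamily.mk_sep_not_countable (hF : IsKurepaFamily F) :
    #{A ∈ F | ¬A.Countable} = #F := by
  refine mk_sep_eq_of_mk_sep_not_lt ((aleph0_le_aleph 2).trans hF.1) ?_
  simp only [not_not]
  calc #{A ∈ F | A.Countable} ≤ #(traces F) :=
        mk_le_mk_of_subset fun A hA => mem_traces_of_countable hA.1 hA.2
    _ ≤ ℵ₁ := mk_traces_le_aleph_one hF.2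
    _ < ℵ_ 2 := aleph_lt_aleph.2 one_lt_two
    _ ≤ #F := hF.1

variable {g : Set Omega1 → Omega1}

theorem mk_image_initialTraces (hg : InjOn g (traces F)) {A : Set Omega1} (hA : A ∈ F)
    (hAc : ¬A.Countable) : #(g '' initialTraces A) = ℵ₁ := by
  refine le_antisymm ((mk_set_le _).trans_eq Omega1.mk_eq) ?_
  rw [mk_image_eq_of_injOn _ _ (hg.mono (initialTraces_subset_traces hA)), aleph_one_le_iff,
    ← not_le, le_aleph0_iff_set_countable]
  exact not_countable_initialTraces Omega1.countable_Iio hAc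

theorem countable_tracesOn_image_initialTraces (hg : InjOn g (traces F))
    (hF : ∀ a, (tracesOn F a).Countable) (c : Omega1) :
    (tracesOn ((fun A => g '' initialTraces A) '' F) c).Countable := by
  set S := traces F ∩ g ⁻¹' Iio c
  have hS : S.Countable :=
    (mapsTo_preimage g _).mono_left inter_subset_right |>.countable_of_injOn
      (hg.mono inter_subset_left) (Omega1.countable_Iio c)
  obtain ⟨b, hb⟩ := Omega1.exists_subset_Iio_of_countable <|
    hS.sUnion fun t ht => countable_of_mem_traces Omega1.countable_Iio ht.1
  refine ((hF b).image fun B => g '' (S ∩ initialTraces B)).mono ?_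
  rintro _ ⟨_, ⟨A, hA, rfl⟩, rfl⟩
  refine ⟨A ∩ Iio b, ⟨A, hA, rfl⟩, ?_⟩
  have hSA : S ∩ initialTraces A = initialTraces A ∩ g ⁻¹' Iio c := by
    rw [inter_right_comm, inter_eq_right.2 (initialTraces_subset_traces hA), inter_comm]
  dsimp only
  rw [inter_initialTraces_inter_Iio (fun t ht => (subset_sUnion_of_mem ht).trans hb), hSA,
    image_inter_preimage]

end Kurepa

theorem exists_ad_kurepa_family_of_kurepa_family
    (F : Set (Set Omega1)) (hF : IsKurepaFamily F) :
    ∃ F' : Set (Set Omega1), IsKurepaFamily F' ∧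
      (∀ A ∈ F', Cardinal.mk A = Cardinal.aleph 1) ∧
      (∀ A ∈ F', ∀ B ∈ F', A ≠ B → (A ∩ B).Countable) ∧
      Cardinal.mk F' = Cardinal.mk F := by
  set F₁ := {A ∈ F | ¬A.Countable}
  have hF₁ : ∀ a, (tracesOn F₁ a).Countable := fun a =>
    (hF.2 a).mono (tracesOn_mono (sep_subset _ _) a)
  obtain ⟨e⟩ := (le_def (traces F₁) Omega1).1 <|
    (mk_traces_le_aleph_one hF₁).trans_eq Omega1.mk_eq.symm
  obtain ⟨g, hg⟩ := exists_injOn_iff_injective.2 ⟨e, e.injective⟩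
  have hcard : #((fun A => g '' initialTraces A) '' F₁) = #F := by
    rw [mk_image_eq_of_injOn _ _ (injOn_image_initialTraces hg), hF.mk_sep_not_countable]
  refine ⟨_, ⟨hcard ▸ hF.1, countable_tracesOn_image_initialTraces hg hF₁⟩, ?_, ?_, hcard⟩
  · rintro _ ⟨A, hA, rfl⟩
    exact mk_image_initialTraces hg hA hA.2
  · rintro _ ⟨A, hA, rfl⟩ _ ⟨B, hB, rfl⟩ hne
    exact countable_image_initialTraces_inter Omega1.countable_Iic hg hA hB
      fun h => hne (h ▸ rfl)
end
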